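/- If r/a = [α₁,...,αₙ] is a Hirzebruch-Jung continued fraction expansion, then r/a⁻¹ = [αₙ,...,α₁], where a⁻¹ denotes the inverse of a modulo r with 0 < a⁻¹ < r. -/

import Mathlib

/-
With `M α = !![α, -1; 1, 0]`, the pair `hjCont l` is the first column of `M α₁ ⋯ M αₙ` and
`hjCont₂ l` its second column. Since `Mᵀ = D M D` for `D = diag(1, -1)`, transposing the product
reverses the list: the numerator `r` is unchanged and the new denominator is `-(hjCont₂ l).1`.
The determinant `r * (hjCont₂ l).2 - (hjCont₂ l).1 * a = 1` makes that denominator an inverse of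
`a` modulo `r`, and as a denominator of a fraction with entries `≥ 2` it lies in `[0, r)`, so it is
the inverse `b`.
-/

/-- Hirzebruch-Jung continued fraction: `hjCont [a1,...,an] = (p, q)` means
`[a1,...,an] = p/q` with `p, q` the standard (coprime) continuants. -/
def hjCont : List ℤ → ℤ × ℤ
  | [] => (1, 0)
  | a :: l => (a * (hjCont l).1 - (hjCont l).2, (hjCont l).1)

def hjCont₂ : List ℤ → ℤ × ℤ
  | [] => (0, 1)
  | a :: l => (a * (hjCont₂ l).1 - (hjCont₂ l).2, (hjCont₂ l).1)

lemma hjCont_append_singleton (l : List ℤ) (a : ℤ) :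
    hjCont (l ++ [a]) = (a * (hjCont l).1 + (hjCont₂ l).1, a * (hjCont l).2 + (hjCont₂ l).2) := by
  induction l with
  | nil => simp [hjCont, hjCont₂]
  | cons x l ih =>
    simp only [List.cons_append, hjCont, hjCont₂, ih, Prod.mk.injEq, and_true]
    ring

lemma hjCont₂_append_singleton (l : List ℤ) (a : ℤ) :
    hjCont₂ (l ++ [a]) = (-(hjCont l).1, -(hjCont l).2) := by
  induction l with
  | nil => simp [hjCont, hjCont₂]
  | cons x l ih =>
    simp only [List.cons_append, hjCont, hjCont₂, ih, Prod.mk.injEq, and_true]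
    ring

lemma hjCont_reverse_and_hjCont₂_reverse (l : List ℤ) :
    hjCont l.reverse = ((hjCont l).1, -(hjCont₂ l).1) ∧
      hjCont₂ l.reverse = (-(hjCont l).2, (hjCont₂ l).2) := by
  induction l with
  | nil => simp [hjCont, hjCont₂]
  | cons x l ih =>
    rw [List.reverse_cons, hjCont_append_singleton, hjCont₂_append_singleton, ih.1, ih.2]
    simp only [hjCont, hjCont₂, Prod.mk.injEq, neg_neg, and_true]
    constructor <;> ring

lemma hjCont_reverse (l : List ℤ) : hjCont l.reverse = ((hjCont l).1, -(hjCont₂ l).1) :=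
  (hjCont_reverse_and_hjCont₂_reverse l).1

lemma hjCont_det (l : List ℤ) :
    (hjCont l).1 * (hjCont₂ l).2 - (hjCont₂ l).1 * (hjCont l).2 = 1 := by
  induction l with
  | nil => simp [hjCont, hjCont₂]
  | cons x l ih => simp only [hjCont, hjCont₂]; linear_combination ih

lemma hjCont_snd_nonneg_lt_fst (l : List ℤ) (hl : ∀ x ∈ l, 2 ≤ x) :
    0 ≤ (hjCont l).2 ∧ (hjCont l).2 < (hjCont l).1 := by
  induction l with
  | nil => simp [hjCont]
  | cons x l ih =>
    have hx : 2 ≤ x := hl x List.mem_cons_self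
    obtain ⟨hq, hqp⟩ := ih fun y hy => hl y (List.mem_cons_of_mem x hy)
    simp only [hjCont]
    constructor <;> nlinarith

theorem stmt3_general (r a b : ℤ)
    (αs : List ℤ) (hα : ∀ x ∈ αs, 2 ≤ x) (hαs : hjCont αs = (r, a))
    (hb1 : 0 < b) (hb2 : b < r) (hab : a * b % r = 1 % r) :
    hjCont αs.reverse = (r, b) := by
  rcases h₂ : hjCont₂ αs with ⟨c, d⟩
  have hrev : hjCont αs.reverse = (r, -c) := by rw [hjCont_reverse, hαs, h₂]
  have hdet : r * d - c * a = 1 := by simpa [hαs, h₂] using hjCont_det αs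
  have hbound := hjCont_snd_nonneg_lt_fst αs.reverse fun x hx => hα x (List.mem_reverse.mp hx)
  obtain ⟨hc, hcr⟩ : 0 ≤ -c ∧ -c < r := by rwa [hrev] at hbound
  obtain ⟨k, hk⟩ := Int.ModEq.dvd (hab : a * b ≡ 1 [ZMOD r])
  have hbc : -c ≡ b [ZMOD r] :=
    Int.modEq_iff_dvd.mpr ⟨b * d + c * k, by linear_combination (-b) * hdet + c * hk⟩
  rw [hrev, ← Int.emod_eq_of_lt hb1.le hb2, ← Int.emod_eq_of_lt hc hcr, hbc]

theorem stmt3 (r a b : ℤ) (hcop : IsCoprime r a) (h1 : 0 < a) (h2 : a < r)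
    (αs : List ℤ) (hα : ∀ x ∈ αs, 2 ≤ x) (hαs : hjCont αs = (r, a))
    (hb1 : 0 < b) (hb2 : b < r) (hab : a * b % r = 1 % r) :
    hjCont αs.reverse = (r, b) :=
  stmt3_general r a b αs hα hαs hb1 hb2 hab
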